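/- In GL(4,ℝ) one has (σ1σ3)⁴ = −I while (σ1⁻¹σ3)⁴ = I; consequently there is no automorphism of the group G⁺ = ⟨σ1, σ2, σ3⟩ sending σ1 to σ1⁻¹, σ2 to σ1²σ2, and σ3 to σ3. (This shows Roli's cube is abstractly chiral.) -/
import Mathlib


open Matrix

/-- The general linear group of `4 × 4` real matrices. -/
abbrev GL4 := GL (Fin 4) ℝ

/-- rho0 : the reflection `ρ0 = diag(−1,1,1,1)`. -/
def rho0 : GL4 :=
  ⟨!![-1,0,0,0; 0,1,0,0; 0,0,1,0; 0,0,0,1],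
   !![-1,0,0,0; 0,1,0,0; 0,0,1,0; 0,0,0,1],
   by ext i j; fin_cases i <;> fin_cases j <;>
      simp [Matrix.mul_apply, Fin.sum_univ_four, Matrix.one_apply, Matrix.vecHead, Matrix.vecTail],
   by ext i j; fin_cases i <;> fin_cases j <;>
      simp [Matrix.mul_apply, Fin.sum_univ_four, Matrix.one_apply, Matrix.vecHead, Matrix.vecTail]⟩

/-- rho1 : the permutation matrix transposing coordinates 1 and 2. -/
def rho1 : GL4 :=
  ⟨!![0,1,0,0; 1,0,0,0; 0,0,1,0; 0,0,0,1],
   !![0,1,0,0; 1,0,0,0; 0,0,1,0; 0,0,0,1],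
   by ext i j; fin_cases i <;> fin_cases j <;>
      simp [Matrix.mul_apply, Fin.sum_univ_four, Matrix.one_apply, Matrix.vecHead, Matrix.vecTail],
   by ext i j; fin_cases i <;> fin_cases j <;>
      simp [Matrix.mul_apply, Fin.sum_univ_four, Matrix.one_apply, Matrix.vecHead, Matrix.vecTail]⟩

/-- rho2 : the permutation matrix transposing coordinates 2 and 3. -/
def rho2 : GL4 :=
  ⟨!![1,0,0,0; 0,0,1,0; 0,1,0,0; 0,0,0,1],
   !![1,0,0,0; 0,0,1,0; 0,1,0,0; 0,0,0,1],
   by ext i j; fin_cases i <;> fin_cases j <;>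
      simp [Matrix.mul_apply, Fin.sum_univ_four, Matrix.one_apply, Matrix.vecHead, Matrix.vecTail],
   by ext i j; fin_cases i <;> fin_cases j <;>
      simp [Matrix.mul_apply, Fin.sum_univ_four, Matrix.one_apply, Matrix.vecHead, Matrix.vecTail]⟩

/-- rho3 : the permutation matrix transposing coordinates 3 and 4. -/
def rho3 : GL4 :=
  ⟨!![1,0,0,0; 0,1,0,0; 0,0,0,1; 0,0,1,0],
   !![1,0,0,0; 0,1,0,0; 0,0,0,1; 0,0,1,0],
   by ext i j; fin_cases i <;> fin_cases j <;>
      simp [Matrix.mul_apply, Fin.sum_univ_four, Matrix.one_apply, Matrix.vecHead, Matrix.vecTail],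
   by ext i j; fin_cases i <;> fin_cases j <;>
      simp [Matrix.mul_apply, Fin.sum_univ_four, Matrix.one_apply, Matrix.vecHead, Matrix.vecTail]⟩


/-- `σ1 = ρ0 ρ1 ρ2 ρ3`. -/
def sigma1 : GL4 := rho0 * rho1 * rho2 * rho3

/-- `σ2 = ρ3 ρ2 ρ1 ρ3`. -/
def sigma2 : GL4 := rho3 * rho2 * rho1 * rho3

/-- `σ3 = ρ2 ρ3`. -/
def sigma3 : GL4 := rho2 * rho3

lemma sigma1_mem : sigma1 ∈ Subgroup.closure ({sigma1, sigma2, sigma3} : Set GL4) :=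
  Subgroup.subset_closure (by simp)

lemma sigma2_mem : sigma2 ∈ Subgroup.closure ({sigma1, sigma2, sigma3} : Set GL4) :=
  Subgroup.subset_closure (by simp)

lemma sigma3_mem : sigma3 ∈ Subgroup.closure ({sigma1, sigma2, sigma3} : Set GL4) :=
  Subgroup.subset_closure (by simp)

/-- `(σ1σ3)⁴ = −I` while `(σ1⁻¹σ3)⁴ = I`; consequently there is no automorphism of
`G⁺ = ⟨σ1, σ2, σ3⟩` with `σ1 ↦ σ1⁻¹`, `σ2 ↦ σ1²σ2`, `σ3 ↦ σ3`: Roli's cube is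
abstractly chiral. -/
theorem roli_is_abstractly_chiral :
    (sigma1 * sigma3) ^ 4 = (-1 : GL4) ∧ (sigma1⁻¹ * sigma3) ^ 4 = 1 ∧
    ¬∃ φ : ↥(Subgroup.closure ({sigma1, sigma2, sigma3} : Set GL4)) ≃*
        ↥(Subgroup.closure ({sigma1, sigma2, sigma3} : Set GL4)),
      φ ⟨sigma1, sigma1_mem⟩ = ⟨sigma1⁻¹, inv_mem sigma1_mem⟩ ∧
      φ ⟨sigma2, sigma2_mem⟩ = ⟨sigma1 ^ 2 * sigma2, mul_mem (pow_mem sigma1_mem 2) sigma2_mem⟩ ∧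
      φ ⟨sigma3, sigma3_mem⟩ = ⟨sigma3, sigma3_mem⟩ := by
  have h1 : (sigma1 * sigma3) ^ 4 = (-1 : GL4) := by
    ext i j
    simp only [sigma1, sigma3, rho0, rho1, rho2, rho3, Units.val_pow_eq_pow_val, Units.val_mul]
    norm_num [pow_succ, Matrix.mul_apply, Fin.sum_univ_four]
    fin_cases i <;> fin_cases j <;> simp [Matrix.vecHead, Matrix.vecTail]
  have h2 : (sigma1⁻¹ * sigma3) ^ 4 = 1 := by
    ext i j
    simp only [sigma1, sigma3, rho0, rho1, rho2, rho3, _root_.mul_inv_rev, Units.inv_mk,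
      Units.val_pow_eq_pow_val, Units.val_mul]
    norm_num [pow_succ, Matrix.mul_apply, Fin.sum_univ_four]
    fin_cases i <;> fin_cases j <;> simp [Matrix.one_apply, Matrix.vecHead, Matrix.vecTail]
  refine ⟨h1, h2, ?_⟩
  rintro ⟨φ, hφ1, -, hφ3⟩
  have key : ((⟨sigma1 * sigma3, mul_mem sigma1_mem sigma3_mem⟩ :
      ↥(Subgroup.closure ({sigma1, sigma2, sigma3} : Set GL4))) ^ 4) = 1 := by
    apply φ.injective
    rw [map_pow, _root_.map_one]
    have : φ (⟨sigma1 * sigma3, mul_mem sigma1_mem sigma3_mem⟩) =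
        ⟨sigma1⁻¹ * sigma3, mul_mem (inv_mem sigma1_mem) sigma3_mem⟩ := by
      have : (⟨sigma1 * sigma3, mul_mem sigma1_mem sigma3_mem⟩ :
          ↥(Subgroup.closure ({sigma1, sigma2, sigma3} : Set GL4))) =
          ⟨sigma1, sigma1_mem⟩ * ⟨sigma3, sigma3_mem⟩ := rfl
      rw [this, _root_.map_mul, hφ1, hφ3]; rfl
    rw [this]
    ext : 1
    push_cast
    exact h2
  have : (sigma1 * sigma3) ^ 4 = 1 := by
    have := congrArg (Subtype.val) key
    simpa using this
  rw [h1] at this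
  have : ((-1 : GL4) : Matrix (Fin 4) (Fin 4) ℝ) = 1 := by rw [this]; rfl
  have h00 := congrFun (congrFun this 0) 0
  norm_num [Matrix.one_apply] at h00
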